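/- arXiv:2406.12982 — 9 statements merged into one kernel-verified Lean document; each statement's English description precedes it below -/
import Mathlib

section
/- Let G = H ⋊ ℤ^n, ρ : ℤ^n → ℝ a character, and Q₁, Q₂ ⊆ H ρ-confining subsets. Then Q₁ ∩ Q₂ is a ρ-confining subset. -/
open Pointwise

/-- Conjugation of a subset `Q ⊆ H` by `z ∈ ℤⁿ`, where `ℤⁿ` acts on `H` by the
automorphisms `φ z` (this is conjugation in the semidirect product `H ⋊ ℤⁿ`). -/
def confConj {H : Type*} [Group H] {n : ℕ} (φ : (Fin n → ℤ) → (H ≃* H))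
    (z : Fin n → ℤ) (Q : Set H) : Set H :=
  (fun x => φ z x) '' Q

/-- `Q ⊆ H` is confining with respect to the character `ρ : ℤⁿ → ℝ`. -/
def IsConfining {H : Type*} [Group H] {n : ℕ} (φ : (Fin n → ℤ) → (H ≃* H))
    (ρ : (Fin n → ℤ) →+ ℝ) (Q : Set H) : Prop :=
  Q⁻¹ = Q ∧
  (∀ z : Fin n → ℤ, 0 ≤ ρ z → confConj φ z Q ⊆ Q) ∧
  (∀ h : H, ∃ z : Fin n → ℤ, φ z h ∈ Q) ∧
  (∃ z₀ : Fin n → ℤ, confConj φ z₀ (Q * Q) ⊆ Q)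

lemma confConj_add {H : Type*} [Group H] {n : ℕ} (φ : (Fin n → ℤ) → (H ≃* H))
    (hφ : ∀ z w : Fin n → ℤ, ∀ x : H, φ (z + w) x = φ w (φ z x))
    (z w : Fin n → ℤ) (S : Set H) :
    confConj φ (z + w) S = confConj φ w (confConj φ z S) := by
  unfold confConj
  rw [Set.image_image]
  exact Set.image_congr' (fun x => hφ z w x)

lemma confConj_mono {H : Type*} [Group H] {n : ℕ} (φ : (Fin n → ℤ) → (H ≃* H))
    (z : Fin n → ℤ) {S T : Set H} (h : S ⊆ T) : confConj φ z S ⊆ confConj φ z T :=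
  Set.image_mono h

/-- Proposition 2.9 (part): the intersection of two ρ-confining subsets is ρ-confining. -/
theorem confining_inter {H : Type*} [Group H] {n : ℕ}
    (φ : (Fin n → ℤ) → (H ≃* H)) (hφ : ∀ z w : Fin n → ℤ, ∀ x : H, φ (z + w) x = φ w (φ z x))
    (ρ : (Fin n → ℤ) →+ ℝ) (Q₁ Q₂ : Set H)
    (hQ₁ : IsConfining φ ρ Q₁) (hQ₂ : IsConfining φ ρ Q₂) :
    IsConfining φ ρ (Q₁ ∩ Q₂) := by
  obtain ⟨h1inv, h1pos, h1all, z₁, h1sq⟩ := hQ₁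
  obtain ⟨h2inv, h2pos, h2all, z₂, h2sq⟩ := hQ₂
  refine ⟨?_, ?_, ?_, ?_⟩
  · rw [Set.inter_inv, h1inv, h2inv]
  · intro z hz x hx
    obtain ⟨y, ⟨hy1, hy2⟩, rfl⟩ := hx
    exact ⟨h1pos z hz ⟨y, hy1, rfl⟩, h2pos z hz ⟨y, hy2, rfl⟩⟩
  · intro h
    obtain ⟨w₁, hw₁⟩ := h1all h
    obtain ⟨w₂, hw₂⟩ := h2all h
    by_cases hc : 0 ≤ ρ (w₁ - w₂)
    · refine ⟨w₁, hw₁, ?_⟩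
      have : φ w₁ h = φ (w₁ - w₂) (φ w₂ h) := by
        rw [← hφ w₂ (w₁ - w₂) h, show w₂ + (w₁ - w₂) = w₁ from by abel]
      rw [this]
      exact h2pos _ hc ⟨φ w₂ h, hw₂, rfl⟩
    · refine ⟨w₂, ?_, hw₂⟩
      have hc' : 0 ≤ ρ (w₂ - w₁) := by
        have : ρ (w₂ - w₁) = -ρ (w₁ - w₂) := by
          rw [← map_neg]; congr 1; abel
        rw [this]; linarith [not_le.mp hc]
      have : φ w₂ h = φ (w₂ - w₁) (φ w₁ h) := by
        rw [← hφ w₁ (w₂ - w₁) h, show w₁ + (w₂ - w₁) = w₂ from by abel]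
      rw [this]
      exact h1pos _ hc' ⟨φ w₁ h, hw₁, rfl⟩
  · set S := (Q₁ ∩ Q₂) * (Q₁ ∩ Q₂) with hS
    have hS1 : S ⊆ Q₁ * Q₁ := Set.mul_subset_mul Set.inter_subset_left Set.inter_subset_left
    have hS2 : S ⊆ Q₂ * Q₂ := Set.mul_subset_mul Set.inter_subset_right Set.inter_subset_right
    have key : ∀ (za zb : Fin n → ℤ) (Qa Qb : Set H),
        (∀ z : Fin n → ℤ, 0 ≤ ρ z → confConj φ z Qb ⊆ Qb) →
        confConj φ za (Qa * Qa) ⊆ Qa → confConj φ zb (Qb * Qb) ⊆ Qb →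
        S ⊆ Qa * Qa → S ⊆ Qb * Qb → 0 ≤ ρ (za - zb) →
        confConj φ za S ⊆ Qa ∩ Qb := by
      intro za zb Qa Qb hbpos hasq hbsq hSa hSb hpos
      intro x hx
      constructor
      · exact hasq (confConj_mono φ za hSa hx)
      · have : confConj φ za S = confConj φ (za - zb) (confConj φ zb S) := by
          rw [← confConj_add φ hφ, show zb + (za - zb) = za from by abel]
        rw [this] at hx
        refine hbpos _ hpos ?_
        exact confConj_mono φ (za - zb) (fun y hy => hbsq (confConj_mono φ zb hSb hy)) hx
    by_cases hc : 0 ≤ ρ (z₁ - z₂)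
    · exact ⟨z₁, key z₁ z₂ Q₁ Q₂ h2pos h1sq h2sq hS1 hS2 hc⟩
    · have hc' : 0 ≤ ρ (z₂ - z₁) := by
        have : ρ (z₂ - z₁) = -ρ (z₁ - z₂) := by
          rw [← map_neg]; congr 1; abel
        rw [this]; linarith [not_le.mp hc]
      exact ⟨z₂, fun x hx => (key z₂ z₁ Q₂ Q₁ h1pos h2sq h1sq hS2 hS1 hc' hx).symm⟩
end

section
/- Let G = H ⋊ ℤ^n and ρ : ℤ^n → ℝ a character. If Q ⊆ H is a ρ-confining subset, then the subgroup ⟨Q⟩ generated by Q is a ρ-confining subgroup (i.e., a ρ-confining subset that is also a subgroup of H). -/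
open Pointwise

/-- If `Q` is ρ-confining, then the subgroup generated by `Q` is a ρ-confining subgroup. -/
theorem confining_closure {H : Type*} [Group H] {n : ℕ}
    (φ : (Fin n → ℤ) → (H ≃* H)) (hφ : ∀ z w : Fin n → ℤ, ∀ x : H, φ (z + w) x = φ w (φ z x))
    (ρ : (Fin n → ℤ) →+ ℝ) (Q : Set H) (hQ : IsConfining φ ρ Q) :
    IsConfining φ ρ ((Subgroup.closure Q : Subgroup H) : Set H) := by
  obtain ⟨hsym, hconj, hall, z₀, hz₀⟩ := hQ
  have hφ0 : ∀ x : H, φ 0 x = x := by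
    intro x
    have h := hφ 0 0 ((φ 0).symm x)
    simp at h
    exact h.symm
  refine ⟨?_, ?_, ?_, 0, ?_⟩
  · ext x
    simp [Set.mem_inv, inv_mem_iff]
  · intro z hz x hx
    obtain ⟨y, hy, rfl⟩ := hx
    have : φ z y ∈ Subgroup.map (φ z).toMonoidHom (Subgroup.closure Q) :=
      ⟨y, hy, rfl⟩
    rw [MonoidHom.map_closure] at this
    exact Subgroup.closure_mono (fun a ha => hconj z hz ha) this
  · intro h
    obtain ⟨z, hz⟩ := hall h
    exact ⟨z, Subgroup.subset_closure hz⟩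
  · intro x hx
    obtain ⟨y, hy, rfl⟩ := hx
    show φ 0 y ∈ _
    rw [hφ0]
    have : (Subgroup.closure Q : Set H) * (Subgroup.closure Q : Set H)
        ⊆ (Subgroup.closure Q : Set H) := by
      rintro a ⟨b, hb, c, hc, rfl⟩
      exact mul_mem hb hc
    exact this hy
end

section
/- Let G = H ⋊ ℤ^n, let {a₁,…,a_n} be a basis of ℤ^n, and let ρ : ℤ^n → ℝ be a character with ρ(aᵢ) ≠ 0 for some i. Then every ρ-confining subset Q ⊆ H contains the centralizer C_H(aᵢ) = {h ∈ H : h·aᵢ = aᵢ·h}. -/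
open Pointwise

lemma exists_int_mul_ge (r c : ℝ) (hr : r ≠ 0) : ∃ k : ℤ, c ≤ k * r := by
  rcases lt_or_gt_of_ne hr with h | h
  · refine ⟨-⌈c / (-r)⌉, ?_⟩
    have h' : (0:ℝ) < -r := by linarith
    have := Int.le_ceil (c / (-r))
    calc c = (c / (-r)) * (-r) := by field_simp
      _ ≤ (⌈c / (-r)⌉ : ℝ) * (-r) := by
          exact mul_le_mul_of_nonneg_right this (le_of_lt h')
      _ = (-⌈c / (-r)⌉ : ℤ) * r := by push_cast; ring
  · refine ⟨⌈c / r⌉, ?_⟩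
    have := Int.le_ceil (c / r)
    calc c = (c / r) * r := by field_simp
      _ ≤ (⌈c / r⌉ : ℝ) * r := mul_le_mul_of_nonneg_right this (le_of_lt h)

/-- Proposition 2.15 (part): if `{a₁,…,aₙ}` is a basis of `ℤⁿ` and `ρ(aᵢ) ≠ 0`, then every
ρ-confining subset contains the centralizer of `aᵢ` in `H`, i.e. the fixed points of `φ aᵢ`. -/
theorem confining_contains_centralizer {H : Type*} [Group H] {n : ℕ}
    (φ : (Fin n → ℤ) → (H ≃* H)) (hφ : ∀ z w : Fin n → ℤ, ∀ x : H, φ (z + w) x = φ w (φ z x))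
    (ρ : (Fin n → ℤ) →+ ℝ) (Q : Set H) (hQ : IsConfining φ ρ Q)
    (b : Module.Basis (Fin n) ℤ (Fin n → ℤ)) (i : Fin n) (hi : ρ (b i) ≠ 0) :
    {h : H | φ (b i) h = h} ⊆ Q := by
  intro h hh
  simp only [Set.mem_setOf_eq] at hh
  set a := b i with ha
  have h0 : ∀ x : H, φ 0 x = x := by
    intro x
    have h00 := hφ 0 0 x
    rw [add_zero] at h00
    exact ((φ 0).injective h00.symm)
  have hk : ∀ k : ℤ, φ (k • a) h = h := by
    intro k
    induction k using Int.induction_on with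
    | zero => simpa using h0 h
    | succ m ih =>
        have e : ((m:ℤ)+1) • a = (m:ℤ) • a + a := by rw [add_smul, one_smul]
        rw [e, hφ, ih, hh]
    | pred m ih =>
        have e : a + (-(m:ℤ)-1) • a = (-(m:ℤ)) • a := by
          rw [show a + (-(m:ℤ)-1) • a = (1 + (-(m:ℤ)-1)) • a by rw [add_smul, one_smul],
            show (1:ℤ) + (-(m:ℤ)-1) = -(m:ℤ) by ring]
        have h2 := hφ a ((-(m:ℤ)-1) • a) h
        rw [e, hh, ih] at h2
        exact h2.symm
  obtain ⟨z, hz⟩ := hQ.2.2.1 h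
  obtain ⟨k, hkk⟩ := exists_int_mul_ge (ρ a) (ρ z) hi
  set w := k • a - z with hw
  have hρw : 0 ≤ ρ w := by
    have : ρ w = k * ρ a - ρ z := by
      rw [hw, map_sub, map_zsmul, zsmul_eq_mul]
    rw [this]; linarith
  have hmem : φ w (φ z h) ∈ Q := by
    apply hQ.2.1 w hρw
    exact ⟨φ z h, hz, rfl⟩
  have heq : φ w (φ z h) = h := by
    rw [← hφ z w h]
    have : z + w = k • a := by rw [hw]; ring
    rw [this, hk]
  rwa [heq] at hmem
end

section
/- Let Γ be a group, and for each H ≤ Γ define Q_H = (⊕_{i<0} H) × (⊕_{i≥0} Γ) ⊆ L(Γ) = ⊕_{i∈ℤ} Γ, viewed as the set of finitely supported functions g : ℤ → Γ with g(i) ∈ H for all i < 0. Then Q_H is a σ-confining subset of the lamplighter Γ ≀ ℤ, i.e.: σ(Q_H) ⊆ Q_H; for every g ∈ L(Γ) there is k ≥ 0 with σ^k(g) ∈ Q_H; and there is k ≥ 0 with σ^k(Q_H · Q_H) ⊆ Q_H, where σ is the right shift σ(g)(i) = g(i−1). Moreover, for subgroups H₁ ≤ H₂ ≤ Γ we have Q_{H₂}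 ⊇ Q_{H₁}. -/
open Pointwise

/-- The right shift on functions `ℤ → Γ`: `σ(g)(i) = g(i-1)`. This is the conjugation
action of the generator of `ℤ` on the base of the lamplighter `Γ ≀ ℤ`. -/
def lampShift {Γ : Type*} (g : ℤ → Γ) : ℤ → Γ := fun i => g (i - 1)

/-- The base group `L(Γ) = ⊕_ℤ Γ` of the lamplighter, realized as the set of finitely
supported functions `ℤ → Γ` inside the full product. -/
def Lfin (Γ : Type*) [Group Γ] : Set (ℤ → Γ) := {g | (Function.mulSupport g).Finite}

/-- `Q_H = (⊕_{i<0} H) × (⊕_{i≥0} Γ)`, for a subgroup `H ≤ Γ`. -/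
def QH {Γ : Type*} [Group Γ] (H : Subgroup Γ) : Set (ℤ → Γ) :=
  {g | (Function.mulSupport g).Finite ∧ ∀ i : ℤ, i < 0 → g i ∈ H}

lemma lampShift_iterate {Γ : Type*} (g : ℤ → Γ) (k : ℕ) :
    lampShift^[k] g = fun i => g (i - k) := by
  induction k with
  | zero => simp
  | succ n ih =>
    rw [Function.iterate_succ_apply', ih]
    funext i
    simp [lampShift, sub_sub]
    ring_nf

/-- For every subgroup `H ≤ Γ`, `Q_H` is a σ-confining subset of the lamplighter `Γ ≀ ℤ`,
and `H ↦ Q_H` is monotone. -/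
theorem QH_confining {Γ : Type*} [Group Γ] (H : Subgroup Γ) :
    (QH H)⁻¹ = QH H ∧
    lampShift '' QH H ⊆ QH H ∧
    (∀ g ∈ Lfin Γ, ∃ k : ℕ, lampShift^[k] g ∈ QH H) ∧
    (∃ k : ℕ, lampShift^[k] '' (QH H * QH H) ⊆ QH H) ∧
    (∀ H₁ H₂ : Subgroup Γ, H₁ ≤ H₂ → QH H₁ ⊆ QH H₂) := by
  refine ⟨?_, ?_, ?_, ?_, ?_⟩
  · ext g
    constructor
    · rintro ⟨hfin, hmem⟩
      refine ⟨?_, fun i hi => ?_⟩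
      · simpa using hfin
      · have := hmem i hi
        simpa using H.inv_mem this
    · rintro ⟨hfin, hmem⟩
      refine ⟨?_, fun i hi => ?_⟩
      · simpa using hfin
      · exact H.inv_mem (hmem i hi)
  · rintro _ ⟨g, ⟨hfin, hmem⟩, rfl⟩
    refine ⟨?_, fun i hi => ?_⟩
    · have : Function.mulSupport (lampShift g) ⊆ (fun i => i + 1) '' Function.mulSupport g := by
        intro i hi
        exact ⟨i - 1, hi, by ring⟩
      exact ((hfin.image _).subset this)
    · exact hmem (i - 1) (by omega)
  · rintro g hg
    obtain ⟨b, hb⟩ := hg.bddBelow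
    refine ⟨(1 - b).toNat, ?_⟩
    rw [lampShift_iterate]
    refine ⟨?_, fun i hi => ?_⟩
    · have : Function.mulSupport (fun i => g (i - ((1 - b).toNat : ℤ)))
          ⊆ (fun i => i + ((1 - b).toNat : ℤ)) '' Function.mulSupport g := by
        intro i hi
        exact ⟨i - ((1 - b).toNat : ℤ), hi, by ring⟩
      exact (hg.image _).subset this
    · have hk : (1 - b : ℤ) ≤ ((1 - b).toNat : ℤ) := Int.self_le_toNat _
      have : i - ((1 - b).toNat : ℤ) ∉ Function.mulSupport g := by
        intro hmem
        have := hb hmem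
        omega
      have := Function.notMem_mulSupport.mp this
      simp only [this]
      exact H.one_mem
  · refine ⟨0, ?_⟩
    rintro _ ⟨h, hh, rfl⟩
    obtain ⟨a, ha, b, hb, rfl⟩ := hh
    simp only [Function.iterate_zero, id]
    refine ⟨?_, fun i hi => ?_⟩
    · have : Function.mulSupport (a * b) ⊆ Function.mulSupport a ∪ Function.mulSupport b :=
        Function.mulSupport_mul a b
      exact (ha.1.union hb.1).subset this
    · exact H.mul_mem (ha.2 i hi) (hb.2 i hi)
  · rintro H₁ H₂ hle g ⟨hfin, hmem⟩
    exact ⟨hfin, fun i hi => hle (hmem i hi)⟩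
end

section
/- Let Γ be a finitely generated infinite group with a fixed finite symmetric generating set, let B_i ⊆ Γ be the ball of radius 2^i for i ≥ 0 and B_i = {1} for i < 0, and let Q = {g ∈ L(Γ) : g(i) ∈ B_i for all i ∈ ℤ} (where L(Γ) = ⊕_{ℤ} Γ). Then Q is a symmetric σ-confining subset of the lamplighter Γ ≀ ℤ: σ(Q) ⊆ Q; for every g ∈ L(Γ) there exists k ≥ 0 with σ^k(g) ∈ Q; and σ(Q·Q) ⊆ Q. -/
open Pointwise

/-- The ball of radius `r` in `Γ` with respect to the generating set `S`. -/
def wordBall {Γ : Type*} [Group Γ] (S : Set Γ) (r : ℕ) : Set Γ :=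
  {g | ∃ l : List Γ, (∀ x ∈ l, x ∈ S) ∧ l.length ≤ r ∧ l.prod = g}

/-- `B i` is the ball of radius `2^i` for `i ≥ 0`, and `{1}` for `i < 0`. -/
def Bball {Γ : Type*} [Group Γ] (S : Set Γ) (i : ℤ) : Set Γ :=
  if 0 ≤ i then wordBall S (2 ^ i.toNat) else {1}

/-- The confining subset built out of balls: `Q = ⊕_{i ∈ ℤ} B_i`. -/
def Qballs {Γ : Type*} [Group Γ] (S : Set Γ) : Set (ℤ → Γ) :=
  {g | (Function.mulSupport g).Finite ∧ ∀ i : ℤ, g i ∈ Bball S i}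

section aux

variable {Γ : Type*} [Group Γ] {S : Set Γ}

lemma one_mem_wordBall (r : ℕ) : (1 : Γ) ∈ wordBall S r :=
  ⟨[], by simp, by simp, by simp⟩

lemma wordBall_mono {r r' : ℕ} (h : r ≤ r') : wordBall S r ⊆ wordBall S r' :=
  fun _ ⟨l, h1, h2, h3⟩ => ⟨l, h1, h2.trans h, h3⟩

lemma wordBall_mul {r r' : ℕ} {a b : Γ} (ha : a ∈ wordBall S r) (hb : b ∈ wordBall S r') :
    a * b ∈ wordBall S (r + r') := by
  obtain ⟨l, h1, h2, rfl⟩ := ha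
  obtain ⟨l', h1', h2', rfl⟩ := hb
  refine ⟨l ++ l', ?_, by simpa using Nat.add_le_add h2 h2', by simp⟩
  intro x hx
  rcases List.mem_append.1 hx with h | h
  exacts [h1 x h, h1' x h]

lemma wordBall_inv (hsym : S⁻¹ = S) {r : ℕ} {a : Γ} (ha : a ∈ wordBall S r) :
    a⁻¹ ∈ wordBall S r := by
  obtain ⟨l, h1, h2, rfl⟩ := ha
  refine ⟨(l.map (·⁻¹)).reverse, ?_, by simpa using h2, ?_⟩
  · intro x hx
    simp only [List.mem_reverse, List.mem_map] at hx
    obtain ⟨y, hy, rfl⟩ := hx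
    rw [← hsym]; simpa using h1 y hy
  · rw [List.prod_reverse_noncomm]
    simp [Function.comp]

lemma one_mem_Bball (i : ℤ) : (1 : Γ) ∈ Bball S i := by
  unfold Bball; split
  · exact one_mem_wordBall _
  · rfl

lemma Bball_mono {i j : ℤ} (h : i ≤ j) : (Bball S i) ⊆ Bball S j := by
  unfold Bball
  split_ifs with hi hj hj
  · exact wordBall_mono (Nat.pow_le_pow_right (by norm_num) (Int.toNat_le_toNat h))
  · omega
  · rintro x rfl; exact one_mem_wordBall _
  · exact Set.Subset.rfl

lemma Bball_mul {i : ℤ} {a b : Γ} (ha : a ∈ Bball S i) (hb : b ∈ Bball S i) :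
    a * b ∈ Bball S (i + 1) := by
  unfold Bball at *
  by_cases hi : 0 ≤ i
  · rw [if_pos hi] at ha hb
    rw [if_pos (by omega)]
    have h2 : (2 : ℕ) ^ (i + 1).toNat = 2 ^ i.toNat + 2 ^ i.toNat := by
      rw [Int.toNat_add hi (by norm_num)]
      rw [pow_add]
      norm_num
      ring
    rw [h2]
    exact wordBall_mul ha hb
  · rw [if_neg hi] at ha hb
    rcases ha with rfl; rcases hb with rfl
    rw [one_mul]; exact one_mem_Bball (i + 1)

lemma mem_wordBall_of_mem (hsym : S⁻¹ = S) (hgen : Subgroup.closure S = ⊤) (a : Γ) :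
    ∃ r : ℕ, a ∈ wordBall S r := by
  have ha : a ∈ Submonoid.closure S := by
    have : a ∈ (Subgroup.closure S).toSubmonoid := by rw [hgen]; trivial
    rwa [Subgroup.closure_toSubmonoid, Set.union_eq_self_of_subset_right (by rw [hsym])] at this
  obtain ⟨l, h1, h2⟩ := Submonoid.exists_list_of_mem_closure ha
  exact ⟨l.length, l, h1, le_refl _, h2⟩

end aux

/-- Example 5.6: for a finitely generated infinite group `Γ` with finite symmetric
generating set `S`, the set `Q = ⊕ B_i` is a symmetric σ-confining subset of `Γ ≀ ℤ`. -/
theorem Qballs_confining {Γ : Type*} [Group Γ] [Infinite Γ] (S : Set Γ)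
    (hfin : S.Finite) (hsym : S⁻¹ = S) (hgen : Subgroup.closure S = ⊤) :
    (Qballs S)⁻¹ = Qballs S ∧
    lampShift '' Qballs S ⊆ Qballs S ∧
    (∀ g ∈ Lfin Γ, ∃ k : ℕ, lampShift^[k] g ∈ Qballs S) ∧
    lampShift '' (Qballs S * Qballs S) ⊆ Qballs S := by
  have hmem : ∀ g ∈ Qballs S, g⁻¹ ∈ Qballs S := by
    rintro g ⟨hsupp, hball⟩
    constructor
    · have h : Function.mulSupport (g⁻¹) = Function.mulSupport g := by
        ext i; simp [Function.mulSupport]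
      rw [h]; exact hsupp
    · intro i
      have hb := hball i
      show (g i)⁻¹ ∈ Bball S i
      unfold Bball at *
      by_cases hi : 0 ≤ i
      · rw [if_pos hi] at hb ⊢
        exact wordBall_inv hsym hb
      · rw [if_neg hi] at hb ⊢
        rcases hb with hb
        simp [show g i = 1 from hb]
  have hQinv : (Qballs S)⁻¹ = Qballs S := by
    ext g
    constructor
    · intro hg
      have := hmem g⁻¹ hg
      simpa using this
    · intro hg
      exact hmem g hg
  refine ⟨hQinv, ?_, ?_, ?_⟩
  · rintro _ ⟨g, ⟨hsupp, hball⟩, rfl⟩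
    refine ⟨?_, fun i => ?_⟩
    · have : Function.mulSupport (lampShift g) ⊆ (fun j : ℤ => j + 1) '' Function.mulSupport g := by
        intro i hi
        exact ⟨i - 1, hi, by ring⟩
      exact (hsupp.image _).subset this
    · exact Bball_mono (by omega) (hball (i - 1))
  · intro g hg
    have hL : ∀ a : Γ, ∃ r : ℕ, a ∈ wordBall S r := mem_wordBall_of_mem hsym hgen
    choose r hr using hL
    classical
    obtain ⟨T, hT⟩ := Set.Finite.exists_finset_coe hg
    set k : ℕ := T.sup (fun j => r (g j) + j.natAbs) with hk
    refine ⟨k, ?_, fun i => ?_⟩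
    · have : Function.mulSupport (lampShift^[k] g) ⊆ (fun j : ℤ => j + k) '' Function.mulSupport g := by
        intro i hi
        have hval : lampShift^[k] g i = g (i - k) := by
          clear hi
          induction k generalizing i with
          | zero => simp
          | succ n ih =>
              rw [Function.iterate_succ_apply', lampShift, ih]
              congr 1; push_cast; ring
        refine ⟨i - k, ?_, by ring⟩
        rwa [Function.mem_mulSupport, ← hval]
      exact (hg.image _).subset this
    · have hval : ∀ i : ℤ, lampShift^[k] g i = g (i - k) := by
        intro i
        induction k generalizing i with
        | zero => simp
        | succ n ih =>
            rw [Function.iterate_succ_apply', lampShift, ih]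
            congr 1; push_cast; ring
      rw [hval]
      by_cases hmem : g (i - k) = 1
      · rw [hmem]; exact one_mem_Bball i
      · have hjT : (i - k : ℤ) ∈ T := by
          rw [← Finset.mem_coe, hT]; exact hmem
        have hle : r (g (i - k)) + (i - k : ℤ).natAbs ≤ k :=
          Finset.le_sup (f := fun j => r (g j) + j.natAbs) hjT
        have h0 : 0 ≤ i := by omega
        have hr2 : r (g (i - k)) ≤ 2 ^ i.toNat := by
          have h1 : r (g (i - k)) ≤ i.toNat := by omega
          exact h1.trans (Nat.le_of_lt Nat.lt_two_pow_self)
        unfold Bball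
        rw [if_pos h0]
        exact wordBall_mono hr2 (hr _)
  · rintro _ ⟨h, ⟨g1, hg1, g2, hg2, rfl⟩, rfl⟩
    refine ⟨?_, fun i => ?_⟩
    · have : Function.mulSupport (lampShift (g1 * g2)) ⊆
          ((fun j : ℤ => j + 1) '' Function.mulSupport g1) ∪
          ((fun j : ℤ => j + 1) '' Function.mulSupport g2) := by
        intro i hi
        have : g1 (i - 1) ≠ 1 ∨ g2 (i - 1) ≠ 1 := by
          by_contra hc
          push_neg at hc
          apply hi
          show g1 (i - 1) * g2 (i - 1) = 1
          rw [hc.1, hc.2, one_mul]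
        rcases this with h | h
        · exact Or.inl ⟨i - 1, h, by ring⟩
        · exact Or.inr ⟨i - 1, h, by ring⟩
      exact ((hg1.1.image _).union (hg2.1.image _)).subset this
    · show g1 (i - 1) * g2 (i - 1) ∈ Bball S i
      have := Bball_mul (hg1.2 (i - 1)) (hg2.2 (i - 1))
      simpa using this
end

section
/- Let Γ be a group and Q ⊆ L(Γ) = ⊕_{ℤ} Γ a σ-confining subset that is right-heavy, i.e., contains L_{≥0}(Γ) = {g : g(i) = 1 for all i < 0}. Then Q_split := Q · L_{≥0}(Γ) is also a σ-confining subset, it equals Q_split · L_{≥0}(Γ), and there exists k ≥ 0 with σ^k(Q_split) ⊆ Q; in particular Q ⊆ Q_split and Q_split is equivalent to Q. -/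
open Pointwise

/-- The subgroup `L_{≥0}(Γ)` of elements of `L(Γ)` supported on nonnegative coordinates. -/
def Lge0 (Γ : Type*) [Group Γ] : Set (ℤ → Γ) :=
  {g | (Function.mulSupport g).Finite ∧ ∀ i : ℤ, i < 0 → g i = 1}

section aux
variable {Γ : Type*} [Group Γ]

lemma lampShift_mul (a b : ℤ → Γ) : lampShift (a * b) = lampShift a * lampShift b := rfl

lemma lampShift_iter_mul (k : ℕ) (a b : ℤ → Γ) :
    lampShift^[k] (a * b) = lampShift^[k] a * lampShift^[k] b := by
  induction k generalizing a b with
  | zero => rfl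
  | succ n ih =>
    rw [Function.iterate_succ_apply, Function.iterate_succ_apply, Function.iterate_succ_apply,
      lampShift_mul, ih]

lemma one_mem_Lge0 : (1 : ℤ → Γ) ∈ Lge0 Γ := by
  refine ⟨?_, fun i _ => rfl⟩
  simp [Function.mulSupport_one]

lemma mul_mem_Lge0 {a b : ℤ → Γ} (ha : a ∈ Lge0 Γ) (hb : b ∈ Lge0 Γ) : a * b ∈ Lge0 Γ := by
  refine ⟨((ha.1.union hb.1).subset (Function.mulSupport_mul a b)), fun i hi => ?_⟩
  show a i * b i = 1
  rw [ha.2 i hi, hb.2 i hi, one_mul]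

lemma inv_mem_Lge0 {a : ℤ → Γ} (ha : a ∈ Lge0 Γ) : a⁻¹ ∈ Lge0 Γ := by
  have hsub : Function.mulSupport a⁻¹ ⊆ Function.mulSupport a := by
    intro i hi
    simp only [Function.mem_mulSupport] at hi ⊢
    intro h
    exact hi (by show (a i)⁻¹ = 1; rw [h, inv_one])
  refine ⟨ha.1.subset hsub, fun i hi => ?_⟩
  show (a i)⁻¹ = 1
  rw [ha.2 i hi, inv_one]

lemma conj_mem_Lge0 (q : ℤ → Γ) {a : ℤ → Γ} (ha : a ∈ Lge0 Γ) :
    q * a * q⁻¹ ∈ Lge0 Γ := by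
  have hsub : Function.mulSupport (q * a * q⁻¹) ⊆ Function.mulSupport a := by
    intro i hi
    simp only [Function.mem_mulSupport] at hi ⊢
    intro h
    apply hi
    show q i * a i * (q i)⁻¹ = 1
    rw [h, mul_one, mul_inv_cancel]
  refine ⟨ha.1.subset hsub, fun i hi => ?_⟩
  show q i * a i * (q i)⁻¹ = 1
  rw [ha.2 i hi, mul_one, mul_inv_cancel]

lemma lampShift_mem_Lge0 {a : ℤ → Γ} (ha : a ∈ Lge0 Γ) : lampShift a ∈ Lge0 Γ := by
  have hsub : Function.mulSupport (lampShift a) ⊆ (fun j => j + 1) '' Function.mulSupport a := by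
    intro i hi
    exact ⟨i - 1, hi, by ring⟩
  refine ⟨(ha.1.image _).subset hsub, fun i hi => ?_⟩
  exact ha.2 (i - 1) (by omega)

lemma lampShift_iter_mem_Lge0 (k : ℕ) {a : ℤ → Γ} (ha : a ∈ Lge0 Γ) :
    lampShift^[k] a ∈ Lge0 Γ := by
  induction k with
  | zero => exact ha
  | succ n ih => rw [Function.iterate_succ_apply']; exact lampShift_mem_Lge0 ih

end aux

/-- Lemma 5.13: a right-heavy σ-confining subset `Q` is equivalent to its split
representative `Q_split = Q · L_{≥0}(Γ)`, which is itself a split σ-confining subset. -/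
theorem split_representative {Γ : Type*} [Group Γ] (Q : Set (ℤ → Γ))
    (hQL : Q ⊆ Lfin Γ) (hsym : Q⁻¹ = Q)
    (hstay : lampShift '' Q ⊆ Q)
    (hget : ∀ g ∈ Lfin Γ, ∃ k : ℕ, lampShift^[k] g ∈ Q)
    (hprod : ∃ k : ℕ, lampShift^[k] '' (Q * Q) ⊆ Q)
    (hrh : Lge0 Γ ⊆ Q) :
    (Q * Lge0 Γ)⁻¹ = Q * Lge0 Γ ∧
    lampShift '' (Q * Lge0 Γ) ⊆ Q * Lge0 Γ ∧
    (∀ g ∈ Lfin Γ, ∃ k : ℕ, lampShift^[k] g ∈ Q * Lge0 Γ) ∧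
    (∃ k : ℕ, lampShift^[k] '' ((Q * Lge0 Γ) * (Q * Lge0 Γ)) ⊆ Q * Lge0 Γ) ∧
    (Q * Lge0 Γ) * Lge0 Γ = Q * Lge0 Γ ∧
    (∃ k : ℕ, lampShift^[k] '' (Q * Lge0 Γ) ⊆ Q) ∧
    Q ⊆ Q * Lge0 Γ := by
  have hQinv : ∀ q ∈ Q, q⁻¹ ∈ Q := by
    intro q hq
    rw [← hsym]
    exact Set.inv_mem_inv.mpr hq
  -- closure under inverse
  have hinv : ∀ x ∈ Q * Lge0 Γ, x⁻¹ ∈ Q * Lge0 Γ := by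
    rintro x ⟨q, hq, g, hg, rfl⟩
    refine ⟨q⁻¹, hQinv q hq, q * g⁻¹ * q⁻¹, conj_mem_Lge0 q (inv_mem_Lge0 hg), ?_⟩
    group
  have hQsub : Q ⊆ Q * Lge0 Γ := by
    intro q hq
    exact ⟨q, hq, 1, one_mem_Lge0, mul_one q⟩
  refine ⟨?_, ?_, ?_, ?_, ?_, ?_, hQsub⟩
  · -- symmetry
    ext x
    constructor
    · intro hx
      have := hinv x⁻¹ (Set.mem_inv.mp hx)
      rwa [inv_inv] at this
    · intro hx
      exact Set.mem_inv.mpr (hinv x hx)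
  · -- shift stays
    rintro _ ⟨x, ⟨q, hq, g, hg, rfl⟩, rfl⟩
    rw [lampShift_mul]
    exact ⟨lampShift q, hstay ⟨q, hq, rfl⟩, lampShift g, lampShift_mem_Lge0 hg, rfl⟩
  · -- getting in
    intro g hg
    obtain ⟨k, hk⟩ := hget g hg
    exact ⟨k, hQsub hk⟩
  · -- product
    obtain ⟨k, hk⟩ := hprod
    refine ⟨k, ?_⟩
    rintro _ ⟨x, ⟨_, ⟨q1, hq1, g1, hg1, rfl⟩, _, ⟨q2, hq2, g2, hg2, rfl⟩, rfl⟩, rfl⟩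
    have hrw : q1 * g1 * (q2 * g2) = (q1 * q2) * ((q2⁻¹ * g1 * q2) * g2) := by group
    have hconj : q2⁻¹ * g1 * q2 ∈ Lge0 Γ := by
      have := conj_mem_Lge0 q2⁻¹ hg1
      rwa [inv_inv] at this
    show lampShift^[k] (q1 * g1 * (q2 * g2)) ∈ Q * Lge0 Γ
    rw [hrw, lampShift_iter_mul]
    refine ⟨_, hk ⟨q1 * q2, Set.mul_mem_mul hq1 hq2, rfl⟩, _,
      lampShift_iter_mem_Lge0 k (mul_mem_Lge0 hconj hg2), rfl⟩
  · -- (Q L) L = Q L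
    rw [mul_assoc]
    congr 1
    ext x
    constructor
    · rintro ⟨a, ha, b, hb, rfl⟩
      exact mul_mem_Lge0 ha hb
    · intro hx
      exact ⟨x, hx, 1, one_mem_Lge0, mul_one x⟩
  · -- shift back into Q
    obtain ⟨k, hk⟩ := hprod
    refine ⟨k, ?_⟩
    rintro _ ⟨x, ⟨q, hq, g, hg, rfl⟩, rfl⟩
    exact hk ⟨q * g, Set.mul_mem_mul hq (hrh hg), rfl⟩
end

section
/- There exists an infinite set O of odd natural numbers with the property that whenever x, y ∈ O and p ∈ ℤ satisfy |x − 2^p y| ≤ 2^{p−3}, then p = 0 and x = y. -/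
lemma key_int (A B q : ℕ) (hB : 1 ≤ B) (hq : 1 ≤ q) :
    (2:ℤ)^q < 8 * |(2^A + 1) - 2^q * (2^B + 1)| := by
  have h2q : (2:ℤ) ≤ 2^q := by
    calc (2:ℤ) = 2^1 := by ring
    _ ≤ 2^q := pow_le_pow_right₀ (by norm_num) hq
  rcases le_or_gt A (q + B) with h | h
  · have hle : (2:ℤ)^A ≤ 2^(q+B) := pow_le_pow_right₀ (by norm_num) h
    have hqb : (2:ℤ)^(q+B) = 2^q * 2^B := pow_add 2 q B
    have : (2:ℤ)^q - 1 ≤ |(2^A + 1) - 2^q * (2^B + 1)| := by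
      rw [abs_sub_comm]
      calc (2:ℤ)^q - 1 ≤ 2^q * (2^B + 1) - (2^A + 1) := by nlinarith
      _ ≤ |2^q * (2^B + 1) - (2^A + 1)| := le_abs_self _
    linarith
  · have hge : (2:ℤ)^(q+B+1) ≤ 2^A := pow_le_pow_right₀ (by norm_num) h
    have hqb : (2:ℤ)^(q+B+1) = 2^q * 2^B * 2 := by rw [pow_add, pow_add]; ring
    have hB2 : (2:ℤ) ≤ 2^B := by
      calc (2:ℤ) = 2^1 := by ring
      _ ≤ 2^B := pow_le_pow_right₀ (by norm_num) hB
    have : (2:ℤ)^q + 1 ≤ |(2^A + 1) - 2^q * (2^B + 1)| := by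
      calc (2:ℤ)^q + 1 ≤ (2^A + 1) - 2^q * (2^B + 1) := by nlinarith
      _ ≤ _ := le_abs_self _
    linarith

lemma int_eq_of_abs_lt_one (n : ℤ) (h : |(n:ℝ)| < 1) : n = 0 := by
  have h' := abs_lt.mp h
  have h1 : (-1 : ℝ) < (n:ℝ) := h'.1
  have h2 : (n:ℝ) < 1 := h'.2
  have : (-1 : ℤ) < n := by exact_mod_cast h1
  have : n < 1 := by exact_mod_cast h2
  omega

/-- Lemma 9.5: there is an infinite set `O` of odd natural numbers such that whenever
`x, y ∈ O` and `p ∈ ℤ` satisfy `|x − 2^p y| ≤ 2^{p−3}` (as real numbers), one has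
`p = 0` and `x = y`. -/
theorem exists_sparse_odd_set :
    ∃ O : Set ℕ, O.Infinite ∧ (∀ x ∈ O, Odd x) ∧
      ∀ x ∈ O, ∀ y ∈ O, ∀ p : ℤ,
        |(x : ℝ) - 2 ^ p * (y : ℝ)| ≤ 2 ^ (p - 3) → p = 0 ∧ x = y := by
  refine ⟨Set.range (fun k : ℕ => 2^(k+1) + 1), ?_, ?_, ?_⟩
  · apply Set.infinite_range_of_injective
    intro a b hab
    simp only at hab
    have := Nat.pow_right_injective (le_refl 2) (by omega : 2^(a+1) = 2^(b+1))
    omega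
  · rintro x ⟨k, rfl⟩
    exact ⟨2^k, by ring⟩
  · rintro x ⟨a, rfl⟩ y ⟨b, rfl⟩ p hp
    simp only at hp ⊢
    set A := a + 1 with hAdef
    set B := b + 1 with hBdef
    set x : ℕ := 2^A + 1 with hx
    set y : ℕ := 2^B + 1 with hy
    rcases lt_trichotomy p 0 with hneg | rfl | hpos
    · exfalso
      set m := (-p).toNat with hm
      have hmp : (m : ℤ) = -p := Int.toNat_of_nonneg (by omega)
      have hm1 : 1 ≤ m := by omega
      have h2 : (0:ℝ) < 2 ^ (m:ℤ) := zpow_pos (by norm_num) _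
      have hmul : |(2:ℝ)^(m:ℤ) * x - y| ≤ 2 ^ ((m:ℤ) + (p - 3)) := by
        have heq : (2:ℝ)^(m:ℤ) * x - y = 2^(m:ℤ) * ((x:ℝ) - 2^p * y) := by
          rw [mul_sub, ← mul_assoc, ← zpow_add₀ (by norm_num : (2:ℝ) ≠ 0), hmp]
          norm_num
        rw [heq, abs_mul, abs_of_pos h2, zpow_add₀ (by norm_num : (2:ℝ) ≠ 0)]
        exact mul_le_mul_of_nonneg_left hp (le_of_lt h2)
      have hsmall : |(2:ℝ)^(m:ℤ) * x - y| < 1 := by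
        have hle : (m:ℤ) + (p - 3) ≤ -3 := by omega
        calc |(2:ℝ)^(m:ℤ) * x - y| ≤ 2 ^ ((m:ℤ) + (p - 3)) := hmul
        _ ≤ 2 ^ (-3 : ℤ) := zpow_le_zpow_right₀ (by norm_num) hle
        _ < 1 := by norm_num
      have hcast : ((2^m * (x:ℤ) - y : ℤ) : ℝ) = (2:ℝ)^(m:ℤ) * x - y := by
        push_cast [zpow_natCast]
        ring
      have hzero : (2^m * (x:ℤ) - y : ℤ) = 0 := by
        apply int_eq_of_abs_lt_one
        rw [hcast]; exact hsmall
      have hdvd : (2:ℤ) ∣ 2^m * (x:ℤ) := Dvd.dvd.mul_right (dvd_pow_self 2 (by omega)) _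
      have hyint : (y:ℤ) = 2^B + 1 := by rw [hy]; push_cast; ring
      have hBdvd : (2:ℤ) ∣ 2^B := dvd_pow_self 2 (by omega)
      omega
    · refine ⟨rfl, ?_⟩
      have h18 : |(x:ℝ) - y| < 1 := by
        have : (2:ℝ) ^ ((0:ℤ) - 3) < 1 := by norm_num
        have h0 : (2:ℝ) ^ (0:ℤ) = 1 := by norm_num
        rw [h0, one_mul] at hp
        linarith
      have : ((x:ℤ) - y) = 0 := by
        apply int_eq_of_abs_lt_one
        have : (((x:ℤ) - y : ℤ) : ℝ) = (x:ℝ) - y := by push_cast; ring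
        rw [this]
        exact h18
      omega
    · exfalso
      set q := p.toNat with hq
      have hqp : (q : ℤ) = p := Int.toNat_of_nonneg (by omega)
      have hq1 : 1 ≤ q := by omega
      have hkey := key_int A B q (by omega) hq1
      have h2p : (2:ℝ)^p = ((2^q : ℤ) : ℝ) := by
        rw [← hqp, zpow_natCast]; push_cast; ring
      rw [h2p] at hp
      have heq : (x:ℝ) - ((2^q : ℤ) : ℝ) * y = (((x:ℤ) - 2^q * (y:ℤ) : ℤ) : ℝ) := by
        push_cast; ring
      have hreal : ((2^q : ℤ) : ℝ) < 8 * |(x:ℝ) - ((2^q : ℤ) : ℝ) * y| := by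
        rw [heq, ← Int.cast_abs]
        have hxz : (x:ℤ) = 2^A + 1 := by rw [hx]; push_cast; ring
        have hyz : (y:ℤ) = 2^B + 1 := by rw [hy]; push_cast; ring
        rw [hxz, hyz]
        exact_mod_cast hkey
      have h3 : (2:ℝ)^(p-3) = ((2^q : ℤ) : ℝ) / 8 := by
        rw [zpow_sub₀ (by norm_num : (2:ℝ) ≠ 0), h2p]
        norm_num
      rw [h3] at hp
      linarith
end

section
/- Fix a set S of odd natural numbers and let S̃ be the smallest subset of ℕ containing S and closed under s ↦ 2s, s ↦ 2⁵s + 1, and s ↦ 2⁵s − 1. Then every element of S̃ can be written as 2^p s + ε where p ≥ 0, s ∈ S, and |ε| < 2^{p−4} (as real numbers). -/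
/-- `S̃` is the smallest subset of `ℕ` containing `S` and closed under `s ↦ 2s`,
`s ↦ 2⁵s + 1`, and `s ↦ 2⁵s − 1`. -/
inductive STilde (S : Set ℕ) : ℕ → Prop
  | base : ∀ s ∈ S, STilde S s
  | double : ∀ s : ℕ, STilde S s → STilde S (2 * s)
  | up : ∀ s : ℕ, STilde S s → STilde S (2 ^ 5 * s + 1)
  | down : ∀ s : ℕ, STilde S s → STilde S (2 ^ 5 * s - 1)

lemma STilde_pos (S : Set ℕ) (hS : ∀ s ∈ S, Odd s) :
    ∀ m : ℕ, STilde S m → 1 ≤ m := by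
  intro m hm
  induction hm with
  | base s hs => exact (hS s hs).pos
  | double s _ ih => omega
  | up s _ ih => omega
  | down s _ ih => omega

lemma key_bound (p : ℕ) (ε : ℤ) (hε : |(ε : ℝ)| < 2 ^ ((p : ℤ) - 4)) (c : ℤ)
    (hc : |c| ≤ 1) : |((32 * ε + c : ℤ) : ℝ)| < 2 ^ (((p + 5 : ℕ) : ℤ) - 4) := by
  have hexp : ((p + 5 : ℕ) : ℤ) - 4 = ((p + 1 : ℕ) : ℤ) := by push_cast; ring
  rw [hexp, zpow_natCast]
  have goal_int : |32 * ε + c| < 2 ^ (p + 1) := by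
    by_cases hp : p ≤ 3
    · have h1 : ((p : ℤ) - 4) ≤ -1 := by omega
      have h2 : (2 : ℝ) ^ ((p : ℤ) - 4) ≤ 2 ^ (-1 : ℤ) :=
        zpow_le_zpow_right₀ (by norm_num) h1
      have h3 : |(ε : ℝ)| < 1 := by
        calc |(ε : ℝ)| < 2 ^ ((p : ℤ) - 4) := hε
          _ ≤ 2 ^ (-1 : ℤ) := h2
          _ < 1 := by norm_num
      have h4 : |ε| < 1 := by exact_mod_cast (by push_cast at h3 ⊢; exact h3 : |(ε : ℝ)| < ((1 : ℤ) : ℝ))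
      have hε0 : ε = 0 := Int.abs_lt_one_iff.mp h4
      subst hε0
      have : (1 : ℤ) < 2 ^ (p + 1) := by
        calc (1 : ℤ) < 2 ^ 1 := by norm_num
          _ ≤ 2 ^ (p + 1) := pow_le_pow_right₀ (by norm_num) (by omega)
      simp only [mul_zero, zero_add]
      exact lt_of_le_of_lt hc this
    · push_neg at hp
      have h1 : ((p : ℤ) - 4) = ((p - 4 : ℕ) : ℤ) := by omega
      rw [h1, zpow_natCast] at hε
      have h2 : |(ε : ℝ)| < (((2 ^ (p - 4) : ℤ)) : ℝ) := by push_cast; exact hε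
      have h3 : |ε| < 2 ^ (p - 4) := by exact_mod_cast h2
      have h4 : |ε| ≤ 2 ^ (p - 4) - 1 := by omega
      have h5 : (32 : ℤ) * 2 ^ (p - 4) = 2 ^ (p + 1) := by
        have : p - 4 + 5 = p + 1 := by omega
        calc (32 : ℤ) * 2 ^ (p - 4) = 2 ^ (p - 4 + 5) := by ring
          _ = 2 ^ (p + 1) := by rw [this]
      calc |32 * ε + c| ≤ |32 * ε| + |c| := abs_add_le _ _
        _ = 32 * |ε| + |c| := by rw [abs_mul]; norm_num
        _ ≤ 32 * (2 ^ (p - 4) - 1) + 1 := by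
            have := mul_le_mul_of_nonneg_left h4 (by norm_num : (0:ℤ) ≤ 32)
            omega
        _ < 2 ^ (p + 1) := by omega
  calc |((32 * ε + c : ℤ) : ℝ)| = ((|32 * ε + c| : ℤ) : ℝ) := by push_cast; ring
    _ < (((2 : ℤ) ^ (p + 1)) : ℝ) := by exact_mod_cast goal_int
    _ = 2 ^ (p + 1) := by push_cast; ring

/-- Lemma 10.4: every element of `S̃` is of the form `2^p s + ε` with `p ≥ 0`, `s ∈ S`,
and `|ε| < 2^{p−4}` (as real numbers). -/
theorem STilde_estimate (S : Set ℕ) (hS : ∀ s ∈ S, Odd s) :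
    ∀ m : ℕ, STilde S m →
      ∃ (p : ℕ) (s : ℕ) (ε : ℤ), s ∈ S ∧
        (m : ℤ) = 2 ^ p * (s : ℤ) + ε ∧ |(ε : ℝ)| < 2 ^ ((p : ℤ) - 4) := by
  intro m hm
  induction hm with
  | base s hs =>
    refine ⟨0, s, 0, hs, by simp, ?_⟩
    simp only [Int.cast_zero, abs_zero]
    positivity
  | double s hst ih =>
    obtain ⟨p, t, ε, hts, heq, hε⟩ := ih
    refine ⟨p + 1, t, 2 * ε, hts, ?_, ?_⟩
    · push_cast
      push_cast at heq
      ring_nf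
      ring_nf at heq
      linarith
    · have hexp : ((p + 1 : ℕ) : ℤ) - 4 = ((p : ℤ) - 4) + 1 := by push_cast; ring
      rw [hexp, zpow_add₀ (by norm_num : (2:ℝ) ≠ 0), zpow_one]
      push_cast
      rw [abs_mul]
      simp only [abs_two]
      calc (2:ℝ) * |(ε:ℝ)| < 2 * 2 ^ ((p:ℤ) - 4) := by linarith [hε]
        _ = 2 ^ ((p:ℤ) - 4) * 2 := by ring
  | up s hst ih =>
    obtain ⟨p, t, ε, hts, heq, hε⟩ := ih
    refine ⟨p + 5, t, 32 * ε + 1, hts, ?_, key_bound p ε hε 1 (by norm_num)⟩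
    push_cast
    push_cast at heq
    ring_nf
    ring_nf at heq
    linarith
  | down s hst ih =>
    obtain ⟨p, t, ε, hts, heq, hε⟩ := ih
    have hpos : 1 ≤ s := STilde_pos S hS s hst
    refine ⟨p + 5, t, 32 * ε - 1, hts, ?_, key_bound p ε hε (-1) (by norm_num)⟩
    have hcast : ((2 ^ 5 * s - 1 : ℕ) : ℤ) = 2 ^ 5 * (s : ℤ) - 1 := by
      omega
    rw [hcast]
    push_cast
    push_cast at heq
    ring_nf
    ring_nf at heq
    linarith
end

section
/- Let n ≥ 2 and let t ∈ (0,1) be irrational. If g is a piecewise linear homeomorphism of [0,1] with finitely many breakpoints, all breakpoints in ℤ[1/n], all slopes integer powers of n, and g(t) = t, then g is the identity on some open neighborhood of t. -/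
/-- `ℤ[1/n]` inside `ℝ`: reals of the form `a / n^k` with `a ∈ ℤ`, `k ∈ ℕ`. -/
def NaryReal (n : ℕ) : Set ℝ := {r | ∃ a : ℤ, ∃ k : ℕ, r = (a : ℝ) / (n : ℝ) ^ k}

lemma naryReal_rat {n : ℕ} {r : ℝ} (h : r ∈ NaryReal n) : ∃ q : ℚ, (q : ℝ) = r := by
  obtain ⟨a, k, rfl⟩ := h
  exact ⟨a / n ^ k, by push_cast; ring⟩

lemma breakpoint_ne {n : ℕ} {r t : ℝ} (hirr : Irrational t)
    (h : r = 0 ∨ r = 1 ∨ r ∈ NaryReal n) : t ≠ r := by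
  rcases h with rfl | rfl | h
  · exact fun h => hirr ⟨0, by simp [h]⟩
  · exact fun h => hirr ⟨1, by simp [h]⟩
  · obtain ⟨q, hq⟩ := naryReal_rat h
    exact fun h => hirr ⟨q, by rw [hq, h]⟩

/-- Lemma 3.12: a piecewise linear homeomorphism of `[0,1]` with breakpoints in `ℤ[1/n]`
and slopes powers of `n` which fixes an irrational `t ∈ (0,1)` is the identity on a
neighborhood of `t`. -/
theorem irrational_fixed_point_locally_trivial (n : ℕ) (hn : 2 ≤ n)
    (g : ℝ → ℝ) (m : ℕ) (x : Fin (m + 1) → ℝ)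
    (hmono : StrictMono x) (hx0 : x 0 = 0) (hxlast : x (Fin.last m) = 1)
    (hbreak : ∀ i : Fin (m + 1), x i = 0 ∨ x i = 1 ∨ x i ∈ NaryReal n)
    (haff : ∀ i : Fin m, ∃ k : ℤ, ∃ c ∈ NaryReal n,
      ∀ s ∈ Set.Icc (x i.castSucc) (x i.succ), g s = (n : ℝ) ^ k * s + c)
    (hcont : ContinuousOn g (Set.Icc (0 : ℝ) 1))
    (hbij : Set.BijOn g (Set.Icc (0 : ℝ) 1) (Set.Icc (0 : ℝ) 1))
    (t : ℝ) (ht : t ∈ Set.Ioo (0 : ℝ) 1) (hirr : Irrational t) (hfix : g t = t) :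
    ∃ ε > 0, ∀ s : ℝ, |s - t| < ε → g s = s := by
  obtain ⟨ht0, ht1⟩ := ht
  -- find the interval containing t
  set S : Finset (Fin (m + 1)) := Finset.univ.filter (fun i => x i < t) with hS
  have hS0 : (0 : Fin (m + 1)) ∈ S := by simp [hS, hx0, ht0]
  have hSne : S.Nonempty := ⟨0, hS0⟩
  set j := S.max' hSne with hj
  have hjS : j ∈ S := S.max'_mem hSne
  have hxj : x j < t := by simpa [hS] using hjS
  have hjne : j ≠ Fin.last m := by
    intro h; rw [h, hxlast] at hxj; linarith
  have hjlt : (j : ℕ) < m := by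
    have h1 : (j : ℕ) < m + 1 := j.isLt
    have h2 : (j : ℕ) ≠ m := fun h => hjne (Fin.ext h)
    omega
  set i : Fin m := ⟨(j : ℕ), hjlt⟩ with hi
  have hcs : i.castSucc = j := by ext; simp [hi]
  have hleft : x i.castSucc < t := by rwa [hcs]
  have hright : t < x i.succ := by
    have hne : t ≠ x i.succ := breakpoint_ne hirr (hbreak i.succ)
    rcases lt_or_ge t (x i.succ) with h | h
    · exact h
    · exfalso
      have : x i.succ < t := lt_of_le_of_ne h (Ne.symm hne)
      have hmem : i.succ ∈ S := by simp [hS, this]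
      have hle : i.succ ≤ j := S.le_max' _ hmem
      have : (j : ℕ) + 1 ≤ (j : ℕ) := by
        have := Fin.le_iff_val_le_val.mp hle
        simpa [hi, Fin.val_succ] using this
      omega
  obtain ⟨k, c, hc, hgk⟩ := haff i
  have htmem : t ∈ Set.Icc (x i.castSucc) (x i.succ) := ⟨hleft.le, hright.le⟩
  have heqt : (n : ℝ) ^ k * t + c = t := by rw [← hgk t htmem, hfix]
  -- k = 0
  have hn1 : (1 : ℝ) < (n : ℝ) := by exact_mod_cast Nat.lt_of_lt_of_le one_lt_two hn
  have hk0 : k = 0 := by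
    by_contra hk
    have hne1 : (n : ℝ) ^ k ≠ 1 := by
      intro h
      have : (n : ℝ) ^ k = (n : ℝ) ^ (0 : ℤ) := by simpa using h
      exact hk (zpow_right_injective₀ (by linarith) (by linarith) this)
    obtain ⟨q, hq⟩ := naryReal_rat hc
    apply hirr
    refine ⟨(-q) / ((n : ℚ) ^ k - 1), ?_⟩
    have hd : (n : ℝ) ^ k - 1 ≠ 0 := sub_ne_zero.mpr hne1
    have ht' : t = (-c) / ((n : ℝ) ^ k - 1) := by
      field_simp
      linarith [heqt]
    rw [ht']
    push_cast [hq]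
    ring
  subst hk0
  simp only [zpow_zero, one_mul] at heqt hgk
  have hc0 : c = 0 := by linarith
  subst hc0
  refine ⟨min (t - x i.castSucc) (x i.succ - t),
    lt_min (by linarith) (by linarith), ?_⟩
  intro s hs
  have h1 : |s - t| < t - x i.castSucc := lt_of_lt_of_le hs (min_le_left _ _)
  have h2 : |s - t| < x i.succ - t := lt_of_lt_of_le hs (min_le_right _ _)
  rw [abs_lt] at h1 h2
  have : g s = s + 0 := hgk s ⟨by linarith [h1.1], by linarith [h2.2]⟩
  simpa using this
end
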